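/- arXiv:1605.04829 — 3 statements merged into one kernel-verified Lean document; each statement's English description precedes it below -/
import Mathlib

section
/- Let G = H ≀ ℤ with base A, and suppose g = w t^k with w ∈ A and k ≠ 0. Then for any nontrivial v ∈ A, v does not commute with g; i.e., C_G(g) ∩ A = {1}. -/
open Function

variable (H : Type*) [Group H]

/-- The base of the restricted wreath product `H ≀ ℤ`: finitely supported functions `ℤ → H`. -/
def RWBase : Subgroup (ℤ → H) where
  carrier := {f | (mulSupport f).Finite}
  one_mem' := by simp [mulSupport_one]
  mul_mem' := fun hf hg => ((hf.union hg).subset (mulSupport_mul _ _))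
  inv_mem' := fun hf => by simpa [mulSupport_inv] using hf

/-- The shift automorphism of the base. -/
def shiftAut (k : ℤ) : MulAut (RWBase H) where
  toFun f := ⟨fun i => (f : ℤ → H) (i - k), by
    have h : (mulSupport fun i => (f : ℤ → H) (i - k)) =
        (fun i : ℤ => i - k) ⁻¹' mulSupport (f : ℤ → H) := rfl
    show (mulSupport fun i => (f : ℤ → H) (i - k)).Finite
    rw [h]
    exact f.2.preimage (Function.Injective.injOn (f := fun i : ℤ => i - k) fun a b hab => by simpa using hab)⟩
  invFun f := ⟨fun i => (f : ℤ → H) (i + k), by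
    have h : (mulSupport fun i => (f : ℤ → H) (i + k)) =
        (fun i : ℤ => i + k) ⁻¹' mulSupport (f : ℤ → H) := rfl
    show (mulSupport fun i => (f : ℤ → H) (i + k)).Finite
    rw [h]
    exact f.2.preimage (Function.Injective.injOn (f := fun i : ℤ => i + k) fun a b hab => by simpa using hab)⟩
  left_inv f := Subtype.ext (funext fun i => by simp)
  right_inv f := Subtype.ext (funext fun i => by simp)
  map_mul' f g := rfl

/-- The action of `ℤ` on the base by shifting. -/
def shiftHom : Multiplicative ℤ →* MulAut (RWBase H) where
  toFun k := shiftAut H (Multiplicative.toAdd k)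
  map_one' := MulEquiv.ext fun f => Subtype.ext (funext fun i => by simp [shiftAut])
  map_mul' k l := MulEquiv.ext fun f => Subtype.ext (funext fun i => by
    simp [shiftAut, sub_sub])

/-- The restricted wreath product `H ≀ ℤ`. -/
abbrev WreathZ := RWBase H ⋊[shiftHom H] Multiplicative ℤ

/-- The base subgroup `A` of `H ≀ ℤ`. -/
def wreathBase : Subgroup (WreathZ H) := (SemidirectProduct.inl (φ := shiftHom H)).range

/-- The generator `t` of the head `ℤ`. -/
def tGen : WreathZ H := SemidirectProduct.inr (Multiplicative.ofAdd 1)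

/-- The element of the base supported at `0` with value `h`. -/
def single0 (h : H) : RWBase H :=
  ⟨fun i => if i = 0 then h else 1, by
    refine Set.Finite.subset (Set.finite_singleton (0 : ℤ)) fun i hi => ?_
    rw [mem_mulSupport] at hi
    by_contra h0
    exact hi (if_neg h0)⟩

/-- The inclusion of `H` as the copy at coordinate `0`. -/
def incl0 (h : H) : WreathZ H := SemidirectProduct.inl (single0 H h)

/-! Commuting with `w t^k` means `v * w = w * (v shifted by k)`, so each coordinate `v (i + k)` is
conjugate to `v i`. The support of `v` is therefore a finite set of integers closed under
translation by `k ≠ 0`, hence empty. -/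

theorem Set.Finite.eq_empty_of_forall_add_mem {G : Type*} [AddLeftCancelMonoid G]
    {s : Set G} {k : G} (hs : s.Finite) (hk : ¬IsOfFinAddOrder k) (h : ∀ i ∈ s, i + k ∈ s) :
    s = ∅ := by
  refine Set.eq_empty_of_forall_notMem fun i hi => ?_
  have orbit : ∀ n : ℕ, i + n • k ∈ s := by
    intro n
    induction n with
    | zero => simpa using hi
    | succ n ih => simpa [succ_nsmul, add_assoc] using h _ ih
  exact Set.infinite_of_injective_forall_mem
    ((add_right_injective i).comp (injective_nsmul_iff_not_isOfFinAddOrder.mpr hk)) orbit hs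

namespace WreathZ

variable {H}

theorem mul_eq_mul_shiftAut_of_commute {v w : RWBase H} {k : ℤ}
    (h : Commute (SemidirectProduct.inl v : WreathZ H)
      (SemidirectProduct.inl w * SemidirectProduct.inr (Multiplicative.ofAdd k))) :
    v * w = w * shiftAut H k v := by
  have hleft := congrArg SemidirectProduct.left h.eq
  simp only [SemidirectProduct.mul_left, SemidirectProduct.left_inl, SemidirectProduct.left_inr,
    SemidirectProduct.right_inl, SemidirectProduct.right_inr, SemidirectProduct.mul_right, map_one,
    mul_one, one_mul] at hleft
  simpa [shiftHom] using hleft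

theorem add_mem_mulSupport_of_commute {v w : RWBase H} {k : ℤ}
    (h : Commute (SemidirectProduct.inl v : WreathZ H)
      (SemidirectProduct.inl w * SemidirectProduct.inr (Multiplicative.ofAdd k)))
    {i : ℤ} (hi : i ∈ mulSupport (v : ℤ → H)) : i + k ∈ mulSupport (v : ℤ → H) := by
  have hpt := congrFun (congrArg Subtype.val (mul_eq_mul_shiftAut_of_commute h)) (i + k)
  intro hvik
  simp only [Subgroup.coe_mul, Pi.mul_apply, hvik, one_mul, shiftAut, MulEquiv.coe_mk,
    Equiv.coe_fn_mk, add_sub_cancel_right] at hpt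
  exact hi (mul_eq_left.mp hpt.symm)

end WreathZ

/-- If `g = w t^k` with `w ∈ A` and `k ≠ 0`, then no nontrivial element of the
base commutes with `g`; i.e. `C_G(g) ⊓ A = ⊥`. -/
theorem centralizer_inf_base_eq_bot {H : Type*} [Group H]
    (w : RWBase H) (k : ℤ) (hk : k ≠ 0)
    (g : WreathZ H)
    (hg : g = SemidirectProduct.inl w * SemidirectProduct.inr (Multiplicative.ofAdd k)) :
    Subgroup.centralizer {g} ⊓ wreathBase H = ⊥ := by
  rw [eq_bot_iff]
  rintro _ ⟨hc, v, rfl⟩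
  have hcomm : Commute (SemidirectProduct.inl v : WreathZ H)
      (SemidirectProduct.inl w * SemidirectProduct.inr (Multiplicative.ofAdd k)) :=
    hg ▸ Subgroup.mem_centralizer_singleton_iff.mp hc
  have hsupp : mulSupport (v : ℤ → H) = ∅ :=
    v.2.eq_empty_of_forall_add_mem (not_isOfFinAddOrder_of_isAddTorsionFree hk)
      fun _ => WreathZ.add_mem_mulSupport_of_commute hcomm
  have hv : v = 1 := Subtype.ext (mulSupport_eq_empty_iff.mp hsupp)
  simp [hv]
end

section
/- Let G = H ≀ ℤ with base A, g = w t^k with k ≠ 0, and suppose v t^α, v' t^α ∈ C_G(g) for the same α ∈ ℤ and v, v' ∈ A. Then v = v'. -/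
open Function

variable (H : Type*) [Group H]

/-- If `g = w t^k` with `k ≠ 0`, and both `v t^α` and `v' t^α` lie in `C_G(g)`
for the same `α`, then `v = v'`. -/
theorem centralizer_unique_base_part {H : Type*} [Group H]
    (w : RWBase H) (k : ℤ) (hk : k ≠ 0)
    (g : WreathZ H)
    (hg : g = SemidirectProduct.inl w * SemidirectProduct.inr (Multiplicative.ofAdd k))
    (v v' : RWBase H) (α : ℤ)
    (hv : SemidirectProduct.inl v * SemidirectProduct.inr (Multiplicative.ofAdd α) ∈
      Subgroup.centralizer {g})
    (hv' : SemidirectProduct.inl v' * SemidirectProduct.inr (Multiplicative.ofAdd α) ∈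
      Subgroup.centralizer {g}) :
    v = v' := by
  -- reduce to: u := v * v'⁻¹ equals 1
  set u : RWBase H := v * v'⁻¹ with hu
  suffices hone : u = 1 by
    have := mul_inv_eq_one.mp hone
    exact this
  -- inl u is in the centralizer
  have hc : (SemidirectProduct.inl u : WreathZ H) ∈ Subgroup.centralizer {g} := by
    have key : (SemidirectProduct.inl u : WreathZ H) =
        (SemidirectProduct.inl v * SemidirectProduct.inr (Multiplicative.ofAdd α)) *
          (SemidirectProduct.inl v' * SemidirectProduct.inr (Multiplicative.ofAdd α))⁻¹ := by
      rw [hu, mul_inv_rev, map_mul, map_inv, mul_assoc, mul_inv_cancel_left]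
    rw [key]
    exact mul_mem hv (inv_mem hv')
  have hcomm : g * SemidirectProduct.inl u = SemidirectProduct.inl u * g :=
    (Subgroup.mem_centralizer_iff.mp hc) g rfl
  rw [hg] at hcomm
  have hleft := congrArg SemidirectProduct.left hcomm
  simp [SemidirectProduct.mul_left] at hleft
  -- hleft : w * shiftHom H (ofAdd k) u = u * w  (as elements of RWBase H)
  have heq : ∀ i : ℤ, (w : ℤ → H) i * (u : ℤ → H) (i - k) = (u : ℤ → H) i * (w : ℤ → H) i := by
    intro i
    have := congrArg (fun x : RWBase H => (x : ℤ → H) i) hleft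
    simpa [shiftHom, shiftAut] using this
  have hstep : ∀ i : ℤ, (u : ℤ → H) i ≠ 1 → (u : ℤ → H) (i - k) ≠ 1 := by
    intro i hi h0
    apply hi
    have := heq i
    rw [h0, mul_one] at this
    have h1 : (1 : H) * (w : ℤ → H) i = (u : ℤ → H) i * (w : ℤ → H) i := by
      simpa using this
    exact (mul_right_cancel h1).symm
  by_contra hne
  have hne' : u ≠ 1 := hne
  have hx : ∃ i, (u : ℤ → H) i ≠ 1 := by
    by_contra hall
    push_neg at hall
    exact hne' (Subtype.ext (funext fun i => hall i))
  obtain ⟨i, hi⟩ := hx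
  have hmem : ∀ n : ℕ, (u : ℤ → H) (i - n * k) ≠ 1 := by
    intro n
    induction n with
    | zero => simpa using hi
    | succ m ih =>
        have := hstep (i - m * k) ih
        have harith : i - (m + 1 : ℕ) * k = i - m * k - k := by push_cast; ring
        rw [harith]
        exact this
  have hinj : Function.Injective (fun n : ℕ => i - n * k) := by
    intro a b hab
    simp only at hab
    have h2 : (a : ℤ) * k = b * k := by linarith
    exact_mod_cast mul_right_cancel₀ hk h2
  have hinf : (mulSupport (u : ℤ → H)).Infinite :=
    Set.infinite_of_injective_forall_mem hinj fun n => mem_mulSupport.mpr (hmem n)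
  exact hinf u.2
end

section
/- Let G = C₂ ≀ ℤ with generating set S = {a, t}, where a generates the copy of C₂ at position 0 and t generates ℤ, and let A₀ = {g in the base : min(support g) ≥ 0}. Then |B_S(n) ∩ A₀| ≤ Σ_{j=0}^{⌊n/2⌋} 2^{j+1} ≤ 4·(√2)^n. -/
open Function

variable (H : Type*) [Group H]

/-- The word length of `g` with respect to the generating set `S`:
the least length of a word in `S ∪ S⁻¹` representing `g`. -/
noncomputable def wordLength {G : Type*} [Group G] (S : Set G) (g : G) : ℕ :=
  sInf {n | ∃ l : List G, (∀ x ∈ l, x ∈ S ∨ x⁻¹ ∈ S) ∧ l.prod = g ∧ l.length = n}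

/-- The ball of radius `n` in the Cayley graph of `G` with respect to `S`. -/
def ball {G : Type*} [Group G] (S : Set G) (n : ℕ) : Set G :=
  {g | wordLength S g ≤ n}

/-- The translation length `τ_S(g) = limsup_n |g^n|_S / n`. -/
noncomputable def translationLength {G : Type*} [Group G] (S : Set G) (g : G) : ℝ :=
  Filter.limsup (fun n : ℕ => (wordLength S (g ^ n) : ℝ) / n) Filter.atTop

/-- The set of base elements whose support is contained in the non-negative
integers (together with the identity). -/
def basePos (H : Type*) [Group H] : Set (WreathZ H) :=
  {g | g.right = 1 ∧ ∀ i : ℤ, i < 0 → (g.left : ℤ → H) i = 1}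

/-!
A word of length `L` in `a^{±1}, t^{±1}` walks the lamplighter from `0` to the final cursor
position `k`, and the lamp at `m` can only be changed while the cursor is at `m`; hence
`|m| + |m - k| + 1 ≤ L` for every lit lamp `m`. For an element of `A₀` in the ball of radius `n`
we have `k = 0` and `m ≥ 0`, so all lamps lie in `[0, n / 2]` and there are at most `2 ^ (n / 2 + 1)`
such elements. This is the last term of the sum, and the sum is below `2 ^ (n / 2 + 2) ≤ 4 (√2)^n`.
-/

open SemidirectProduct Multiplicative

section Generation

variable {H}

lemma tGen_zpow (k : ℤ) : tGen H ^ k = inr (ofAdd k) := by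
  rw [tGen, ← map_zpow, ← ofAdd_zsmul, smul_eq_mul, mul_one]

lemma shiftHom_single0_apply (j i : ℤ) (h : H) :
    ((shiftHom H (ofAdd j) (single0 H h) : RWBase H) : ℤ → H) i = if i = j then h else 1 := by
  show (if i - j = 0 then h else 1) = _
  simp only [sub_eq_zero]

lemma inl_shiftHom_single0 (j : ℤ) (h : H) :
    (inl (shiftHom H (ofAdd j) (single0 H h)) : WreathZ H) =
      tGen H ^ j * incl0 H h * (tGen H ^ j)⁻¹ := by
  rw [tGen_zpow, ← map_inv, incl0, inl_aut]

lemma inl_mem_of_tGen_mem_of_incl0_mem {K : Subgroup (WreathZ H)} (ht : tGen H ∈ K)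
    (hl : ∀ h, incl0 H h ∈ K) (f : RWBase H) : inl f ∈ K := by
  classical
  suffices ∀ F : Finset ℤ, ∀ f : RWBase H, mulSupport (f : ℤ → H) ⊆ F → inl f ∈ K from
    this f.2.toFinset f f.2.coe_toFinset.ge
  intro F
  induction F using Finset.induction_on with
  | empty =>
    intro f hf
    obtain rfl : f = 1 := Subtype.ext (mulSupport_eq_empty_iff.mp (by simpa using hf))
    simp
  | insert j F _ ih =>
    intro f hf
    set σ := shiftHom H (ofAdd j) (single0 H ((f : ℤ → H) j))
    have hσ : inl σ ∈ K := by
      rw [inl_shiftHom_single0]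
      exact mul_mem (mul_mem (zpow_mem ht j) (hl _)) (inv_mem (zpow_mem ht j))
    -- dividing by `σ` switches off the lamp at `j` and nothing else
    have hrest : mulSupport ((f * σ⁻¹ : RWBase H) : ℤ → H) ⊆ F := by
      intro i hi
      have hfi : (f : ℤ → H) i * ((σ : ℤ → H) i)⁻¹ ≠ 1 := hi
      rw [shiftHom_single0_apply] at hfi
      by_cases hij : i = j
      · simp [hij] at hfi
      · rw [if_neg hij, inv_one, mul_one] at hfi
        exact (Finset.mem_insert.mp (hf hfi)).resolve_left hij
    simpa using mul_mem (ih _ hrest) hσ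

lemma eq_top_of_tGen_mem_of_incl0_mem {K : Subgroup (WreathZ H)} (ht : tGen H ∈ K)
    (hl : ∀ h, incl0 H h ∈ K) : K = ⊤ := by
  refine (Subgroup.eq_top_iff' K).mpr fun g => ?_
  rw [← inl_left_mul_inr_right g, ← ofAdd_toAdd g.right, ← tGen_zpow]
  exact mul_mem (inl_mem_of_tGen_mem_of_incl0_mem ht hl _) (zpow_mem ht _)

end Generation

lemma exists_list_length_eq_wordLength {G : Type*} [Group G] {S : Set G}
    (hS : Subgroup.closure S = ⊤) (g : G) :
    ∃ l : List G, (∀ x ∈ l, x ∈ S ∨ x⁻¹ ∈ S) ∧ l.prod = g ∧ l.length = wordLength S g := by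
  have hg : g ∈ Subgroup.closure S := hS ▸ Subgroup.mem_top g
  rw [← Subgroup.mem_toSubmonoid, Subgroup.closure_toSubmonoid] at hg
  obtain ⟨l, hl, rfl⟩ := Submonoid.exists_list_of_mem_closure hg
  exact Nat.sInf_mem (s := {n | ∃ l' : List G, (∀ x ∈ l', x ∈ S ∨ x⁻¹ ∈ S) ∧ l'.prod = l.prod ∧
    l'.length = n}) ⟨l.length, l, fun x hx => (hl x hx).imp_right Set.mem_inv.mp, rfl, rfl⟩

section Reach

variable {H}

/-- Single steps of the lamplighter: change the lamp at the cursor, or move the cursor by at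
most one. -/
def lampMoves : Set (WreathZ H) :=
  {g | g.right = 1 ∧ ∀ i ≠ 0, (g.left : ℤ → H) i = 1} ∪ {g | g.left = 1 ∧ |toAdd g.right| ≤ 1}

/-- A lamplighter starting at `0` who ends at `k` and has lit the lamp at `m` has walked at least
`|m| + |m - k|` steps and spent one more on the lamp. -/
def ReachableWithin (L : ℕ) (g : WreathZ H) : Prop :=
  |toAdd g.right| ≤ L ∧
    ∀ m, (g.left : ℤ → H) m ≠ 1 → |m| + |m - toAdd g.right| + 1 ≤ L

lemma incl0_mem_lampMoves (h : H) : incl0 H h ∈ lampMoves :=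
  Or.inl ⟨rfl, fun _ hi => if_neg hi⟩

lemma tGen_mem_lampMoves : tGen H ∈ lampMoves :=
  Or.inr ⟨rfl, by simp [tGen]⟩

lemma inv_mem_lampMoves {g : WreathZ H} (hg : g ∈ lampMoves) : g⁻¹ ∈ lampMoves := by
  rcases hg with ⟨hr, hl⟩ | ⟨hl, hr⟩
  · refine Or.inl ⟨by simp [hr], fun i hi => ?_⟩
    simp [hr, hl i hi]
  · exact Or.inr ⟨by simp [hl], by simpa using hr⟩

lemma ReachableWithin.mono {L L' : ℕ} {g : WreathZ H} (hg : ReachableWithin L g) (h : L ≤ L') :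
    ReachableWithin L' g := by
  obtain ⟨hk, hm⟩ := hg
  exact ⟨hk.trans (by exact_mod_cast h), fun m hgm => (hm m hgm).trans (by exact_mod_cast h)⟩

lemma ReachableWithin.lamp_mul {L : ℕ} {s g : WreathZ H} (hsr : s.right = 1)
    (hsl : ∀ i ≠ 0, (s.left : ℤ → H) i = 1) (hg : ReachableWithin L g) :
    ReachableWithin (L + 1) (s * g) := by
  obtain ⟨hk, hm⟩ := hg
  have hright : (s * g).right = g.right := by simp [hsr]
  have hleft (m : ℤ) : ((s * g).left : ℤ → H) m = (s.left : ℤ → H) m * (g.left : ℤ → H) m := by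
    simp [hsr]
  refine ⟨by rw [hright]; push_cast; omega, fun m hgm => ?_⟩
  rw [hright]
  push_cast
  by_cases hm0 : m = 0
  · subst hm0
    simp only [abs_zero, zero_sub, abs_neg]
    omega
  · rw [hleft, hsl m hm0, one_mul] at hgm
    linarith [hm m hgm]

lemma ReachableWithin.move_mul {L : ℕ} {s g : WreathZ H} (hsl : s.left = 1)
    (hsr : |toAdd s.right| ≤ 1) (hg : ReachableWithin L g) :
    ReachableWithin (L + 1) (s * g) := by
  obtain ⟨hk, hm⟩ := hg
  have hright : toAdd (s * g).right = toAdd s.right + toAdd g.right := rfl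
  have hleft (m : ℤ) : ((s * g).left : ℤ → H) m = (g.left : ℤ → H) (m - toAdd s.right) := by
    simp only [mul_left, hsl, one_mul]; rfl
  refine ⟨?_, fun m hgm => ?_⟩
  · rw [hright]; push_cast
    linarith [abs_add_le (toAdd s.right) (toAdd g.right)]
  · rw [hleft] at hgm
    rw [hright]; push_cast
    have htri : |m| ≤ |toAdd s.right| + |m - toAdd s.right| := by
      simpa using abs_sub_le m (m - toAdd s.right) 0
    rw [show m - (toAdd s.right + toAdd g.right) = m - toAdd s.right - toAdd g.right by ring]
    linarith [hm _ hgm]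

lemma reachableWithin_length_prod (l : List (WreathZ H)) (hl : ∀ x ∈ l, x ∈ lampMoves) :
    ReachableWithin l.length l.prod := by
  induction l with
  | nil => exact ⟨by simp, fun m hm => absurd rfl hm⟩
  | cons s l ih =>
    have hrest := ih fun x hx => hl x (List.mem_cons_of_mem s hx)
    rw [List.prod_cons, List.length_cons]
    rcases hl s List.mem_cons_self with ⟨hsr, hsl⟩ | ⟨hsl, hsr⟩
    · exact hrest.lamp_mul hsr hsl
    · exact hrest.move_mul hsl hsr

lemma reachableWithin_of_mem_ball {S : Set (WreathZ H)} (hS : S ⊆ lampMoves)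
    (hgen : Subgroup.closure S = ⊤) {n : ℕ} {g : WreathZ H} (hg : g ∈ ball S n) :
    ReachableWithin n g := by
  obtain ⟨l, hl, rfl, hlen⟩ := exists_list_length_eq_wordLength hgen g
  refine (reachableWithin_length_prod l fun x hx => ?_).mono (hlen ▸ hg)
  rcases hl x hx with h | h
  · exact hS h
  · simpa using inv_mem_lampMoves (hS h)

lemma left_eq_one_of_mem_ball_inter_basePos {S : Set (WreathZ H)} (hS : S ⊆ lampMoves)
    (hgen : Subgroup.closure S = ⊤) {n : ℕ} {g : WreathZ H} (hg : g ∈ ball S n ∩ basePos H)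
    {i : ℤ} (hi : i < 0 ∨ ((n / 2 : ℕ) : ℤ) < i) : (g.left : ℤ → H) i = 1 := by
  obtain ⟨hball, hright, hneg⟩ := hg
  rcases hi with hi | hi
  · exact hneg i hi
  · by_contra hgi
    have := (reachableWithin_of_mem_ball hS hgen hball).2 i hgi
    rw [hright, toAdd_one, sub_zero, abs_of_pos (by omega)] at this
    omega

lemma card_ball_inter_basePos_le [Finite H] {S : Set (WreathZ H)} (hS : S ⊆ lampMoves)
    (hgen : Subgroup.closure S = ⊤) (n : ℕ) :
    Nat.card (ball S n ∩ basePos H : Set (WreathZ H)) ≤ Nat.card H ^ (n / 2 + 1) := by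
  -- an element of the intersection is determined by its lamps at `0, …, n / 2`
  have hinj : Injective fun g : (ball S n ∩ basePos H : Set (WreathZ H)) =>
      fun j : Fin (n / 2 + 1) => ((g.1.left : RWBase H) : ℤ → H) j := by
    rintro ⟨g, hg⟩ ⟨g', hg'⟩ h
    refine Subtype.ext (SemidirectProduct.ext (Subtype.ext (funext fun i => ?_))
      (hg.2.1.trans hg'.2.1.symm))
    by_cases hi : i < 0 ∨ ((n / 2 : ℕ) : ℤ) < i
    · rw [left_eq_one_of_mem_ball_inter_basePos hS hgen hg hi,
        left_eq_one_of_mem_ball_inter_basePos hS hgen hg' hi]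
    · have := congrFun h ⟨i.toNat, by omega⟩
      simpa [Int.toNat_of_nonneg (by omega : 0 ≤ i)] using this
  simpa [Nat.card_fun] using Nat.card_le_card_of_injective _ hinj

end Reach

lemma lamplighter_generators_subset_lampMoves :
    ({incl0 (Multiplicative (ZMod 2)) (ofAdd 1), tGen (Multiplicative (ZMod 2))} :
      Set (WreathZ (Multiplicative (ZMod 2)))) ⊆ lampMoves := by
  rintro x (rfl | rfl)
  · exact incl0_mem_lampMoves _
  · exact tGen_mem_lampMoves

lemma closure_lamplighter_generators_eq_top :
    Subgroup.closure ({incl0 (Multiplicative (ZMod 2)) (ofAdd 1), tGen (Multiplicative (ZMod 2))} :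
      Set (WreathZ (Multiplicative (ZMod 2)))) = ⊤ := by
  refine eq_top_of_tGen_mem_of_incl0_mem (Subgroup.subset_closure (by simp)) fun h => ?_
  obtain rfl | rfl : h = 1 ∨ h = ofAdd 1 := by revert h; decide
  · have : single0 (Multiplicative (ZMod 2)) 1 = 1 := Subtype.ext (funext fun i => ite_self 1)
    simp [incl0, this]
  · exact Subgroup.subset_closure (by simp)

lemma sum_range_two_pow_succ_lt (k : ℕ) : ∑ j ∈ Finset.range k, 2 ^ (j + 1) < 2 ^ (k + 1) := by
  simp_rw [pow_succ, ← Finset.sum_mul]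
  exact Nat.mul_lt_mul_of_pos_right (Nat.geomSum_lt le_rfl (by simp)) two_pos

lemma two_pow_half_le_sqrt_two_pow (n : ℕ) : (2 : ℝ) ^ (n / 2) ≤ Real.sqrt 2 ^ n := by
  have h2 : (2 : ℝ) ^ (n / 2) = Real.sqrt 2 ^ (2 * (n / 2)) := by
    rw [pow_mul, Real.sq_sqrt zero_le_two]
  rw [h2]
  exact pow_le_pow_right₀ (Real.one_le_sqrt.mpr one_le_two) (Nat.mul_div_le n 2)

/-- For the lamplighter group `G = C₂ ≀ ℤ` with generating set `S = {a, t}`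
(`a` the generator of the copy of `C₂` at position `0`, `t` the generator of `ℤ`),
the number of elements of the ball of radius `n` lying in
`A₀ = {g ∈ base : min (support g) ≥ 0}` is at most
`Σ_{j=0}^{⌊n/2⌋} 2^{j+1} ≤ 4 (√2)^n`. -/
theorem lamplighter_ball_inter_basePos_bound (n : ℕ)
    (a : WreathZ (Multiplicative (ZMod 2)))
    (ha : a = incl0 (Multiplicative (ZMod 2)) (Multiplicative.ofAdd (1 : ZMod 2)))
    (S : Set (WreathZ (Multiplicative (ZMod 2))))
    (hS : S = {a, tGen (Multiplicative (ZMod 2))}) :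
    Nat.card (ball S n ∩ basePos (Multiplicative (ZMod 2)) : Set (WreathZ (Multiplicative (ZMod 2)))) ≤
        ∑ j ∈ Finset.range (n / 2 + 1), 2 ^ (j + 1) ∧
      ((∑ j ∈ Finset.range (n / 2 + 1), 2 ^ (j + 1) : ℕ) : ℝ) ≤ 4 * Real.sqrt 2 ^ n := by
  subst ha hS
  constructor
  · calc _ ≤ Nat.card (Multiplicative (ZMod 2)) ^ (n / 2 + 1) :=
          card_ball_inter_basePos_le lamplighter_generators_subset_lampMoves
            closure_lamplighter_generators_eq_top n
      _ = 2 ^ (n / 2 + 1) := by simp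
      _ ≤ _ := Finset.single_le_sum (f := fun j => 2 ^ (j + 1)) (fun _ _ => Nat.zero_le _)
          (Finset.self_mem_range_succ _)
  · calc ((∑ j ∈ Finset.range (n / 2 + 1), 2 ^ (j + 1) : ℕ) : ℝ)
        ≤ ((2 ^ (n / 2 + 2) : ℕ) : ℝ) := by exact_mod_cast (sum_range_two_pow_succ_lt _).le
      _ = 4 * 2 ^ (n / 2) := by push_cast; ring
      _ ≤ 4 * Real.sqrt 2 ^ n := by gcongr; exact two_pow_half_le_sqrt_two_pow n
end
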